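/- arXiv:1706.01234 — 2 statements merged into one kernel-verified Lean document; each statement's English description precedes it below -/
import Mathlib

section
/- For all real a, all b ≥ 0 and all q ≥ 1, one has (a+b)^{*q} - a^{*q} ≥ 2^{1-q} b^q, where x^{*q} := |x|^{q-1} x denotes the signed q-th power. -/
/-- The signed `q`-th power `x^{*q} := |x|^{q-1} x`. -/
noncomputable def sPow (q x : ℝ) : ℝ := |x| ^ (q - 1) * x

lemma sPow_of_nonneg {q x : ℝ} (hq : 1 ≤ q) (hx : 0 ≤ x) : sPow q x = x ^ q := by
  unfold sPow
  rw [abs_of_nonneg hx]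
  rcases eq_or_lt_of_le hx with h | h
  · rw [← h]
    simp [Real.zero_rpow (by linarith : q ≠ 0)]
  · rw [← Real.rpow_add_one h.ne', sub_add_cancel]

lemma sPow_neg (q x : ℝ) : sPow q (-x) = - sPow q x := by
  unfold sPow; rw [abs_neg]; ring

lemma real_add_rpow {a b q : ℝ} (ha : 0 ≤ a) (hb : 0 ≤ b) (hq : 1 ≤ q) :
    a ^ q + b ^ q ≤ (a + b) ^ q := by
  have h := NNReal.add_rpow_le_rpow_add (⟨a, ha⟩ : NNReal) (⟨b, hb⟩ : NNReal) hq
  have := NNReal.coe_le_coe.2 h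
  push_cast at this
  exact this

lemma key (a b q : ℝ) (hb : 0 ≤ b) (hq : 1 ≤ q) (ha : -(b/2) ≤ a) :
    sPow q (a + b) - sPow q a ≥ (2:ℝ) ^ (1 - q) * b ^ q := by
  have hq0 : (0:ℝ) < q := by linarith
  have hab : 0 ≤ a + b := by linarith
  have h2 : (2:ℝ) ^ (1 - q) * b ^ q = 2 * (b / 2) ^ q := by
    rw [Real.div_rpow hb (by norm_num : (0:ℝ) ≤ 2)]
    rw [show (1:ℝ) - q = 1 + (-q) by ring, Real.rpow_add (by norm_num : (0:ℝ) < 2),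
      Real.rpow_one, Real.rpow_neg (by norm_num : (0:ℝ) ≤ 2)]
    field_simp
  rw [h2]
  rcases le_or_gt 0 a with h0 | h0
  · -- a ≥ 0 : superadditivity
    rw [sPow_of_nonneg hq hab, sPow_of_nonneg hq h0]
    have hsup := real_add_rpow h0 hb hq
    have hle : 2 * (b / 2) ^ q ≤ b ^ q := by
      have h := real_add_rpow (by linarith : (0:ℝ) ≤ b/2) (by linarith : (0:ℝ) ≤ b/2) hq
      rw [add_halves] at h
      linarith
    linarith
  · -- -(b/2) ≤ a < 0 : convexity midpoint
    rw [sPow_of_nonneg hq hab, show sPow q a = - sPow q (-a) by rw [sPow_neg]; ring,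
      sPow_of_nonneg hq (by linarith : (0:ℝ) ≤ -a)]
    have hconv := (convexOn_rpow hq).2 (Set.mem_Ici.2 hab) (Set.mem_Ici.2 (by linarith : (0:ℝ) ≤ -a))
      (by norm_num : (0:ℝ) ≤ 1/2) (by norm_num : (0:ℝ) ≤ 1/2) (by norm_num)
    simp only [smul_eq_mul] at hconv
    have hmid : (1/2 : ℝ) * (a + b) + 1/2 * (-a) = b / 2 := by ring
    rw [hmid] at hconv
    linarith

theorem stmt1 (a b q : ℝ) (hb : 0 ≤ b) (hq : 1 ≤ q) :
    sPow q (a + b) - sPow q a ≥ (2:ℝ) ^ (1 - q) * b ^ q := by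
  rcases le_or_gt (-(b/2)) a with h | h
  · exact key a b q hb hq h
  · have h' : -(b/2) ≤ -a - b := by linarith
    have := key (-a - b) b q hb hq h'
    rw [show -a - b + b = -a by ring] at this
    have e1 : sPow q (-a) = -sPow q a := sPow_neg q a
    have e2 : sPow q (-a - b) = -sPow q (a + b) := by
      rw [show -a - b = -(a + b) by ring, sPow_neg]
    rw [e1, e2] at this
    linarith
end

section
/- Let s ∈ (0,1), p > 1, D ⊂ ℝ^N a bounded open set, and u ∈ W̃^{s,p}(D) with u ≥ 0 on ℝ^N \ D. Then the negative part u^- belongs to W^{s,p}(ℝ^N) and vanishes on ℝ^N \ D, i.e. u^- ∈ 𝒲^{s,p}_0(D). -/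
/-!
Write `v = u⁻`. Since `u ≥ 0` off `D`, `v` vanishes off `D`, so its `L^p` norm is controlled by
that of `u` on the compact set `closure D`, and since `t ↦ t⁻` is `1`-Lipschitz the Gagliardo
integral of `v` over `D × ℝ^N` is dominated by that of `u`. Over `Dᶜ × ℝ^N` only pairs `(x, y)`
with `y ∈ D` contribute, with integrand `v(y)^p |x - y|^{-N-sp}`; swapping the integrals and using
`v(y) ≤ |u(y) - u(x)|` for `x ∉ D` bounds this part by the Gagliardo integral of `u` over
`D × Dᶜ`. As `u` need not be measurable, the swap goes through a measurable minorant of `v^p`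
with the same integral.
-/


open MeasureTheory

/-- Gagliardo-type seminorm `∫_D ∫_{ℝ^N} |u(x)-u(y)|^p / |x-y|^{N+sp} dx dy` (as an
extended nonnegative real). -/
noncomputable def gagliardo (N : ℕ) (s p : ℝ) (D : Set (EuclideanSpace ℝ (Fin N)))
    (u : EuclideanSpace ℝ (Fin N) → ℝ) : ENNReal :=
  ∫⁻ x in D, ∫⁻ y, ENNReal.ofReal (|u x - u y| ^ p / ‖x - y‖ ^ ((N : ℝ) + s * p))

/-- `u ∈ L^p_loc(ℝ^N)`. -/
def memLpLoc (N : ℕ) (p : ℝ) (u : EuclideanSpace ℝ (Fin N) → ℝ) : Prop :=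
  ∀ K : Set (EuclideanSpace ℝ (Fin N)), IsCompact K →
    ∫⁻ x in K, ENNReal.ofReal (|u x| ^ p) < ⊤

/-- Membership in `W̃^{s,p}(D)`. -/
def memWtilde (N : ℕ) (s p : ℝ) (D : Set (EuclideanSpace ℝ (Fin N)))
    (u : EuclideanSpace ℝ (Fin N) → ℝ) : Prop :=
  memLpLoc N p u ∧ gagliardo N s p D u < ⊤

open scoped ENNReal

section Lintegral

variable {α β : Type*} [MeasurableSpace α] [MeasurableSpace β] {μ : Measure α} {ν : Measure β}

lemma lintegral_mul_eq_zero_of_lintegral_eq_zero {w k : α → ℝ≥0∞} (hk : Measurable k)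
    (hk_ne_top : ∀ y, k y ≠ ∞) (hw : ∫⁻ y, w y ∂μ = 0) : ∫⁻ y, w y * k y ∂μ = 0 := by
  obtain ⟨g, hg, hg_le, hg_eq⟩ := exists_measurable_le_lintegral_eq μ (fun y => w y * k y)
  have hdiv : ∫⁻ y, g y / k y ∂μ = 0 :=
    le_antisymm (hw ▸ lintegral_mono fun y => ENNReal.div_le_of_le_mul (hg_le y)) bot_le
  have hg_ae : g =ᵐ[μ] 0 := by
    filter_upwards [(lintegral_eq_zero_iff (hg.div hk)).1 hdiv] with y hy
    exact (ENNReal.div_eq_zero_iff.1 hy).resolve_right (hk_ne_top y)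
  rw [hg_eq, lintegral_congr_ae hg_ae]
  simp

lemma lintegral_mul_eq_of_le_of_lintegral_eq {f g k : α → ℝ≥0∞} (hg : Measurable g) (hgf : g ≤ f)
    (hfg : ∫⁻ y, f y ∂μ = ∫⁻ y, g y ∂μ) (hf : ∫⁻ y, f y ∂μ ≠ ∞) (hk : Measurable k)
    (hk_ne_top : ∀ y, k y ≠ ∞) : ∫⁻ y, f y * k y ∂μ = ∫⁻ y, g y * k y ∂μ := by
  have hsub : ∫⁻ y, (f y - g y) ∂μ = 0 := by
    have hsplit := lintegral_add_left (μ := μ) hg (fun y => f y - g y)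
    simp only [add_tsub_cancel_of_le (hgf _)] at hsplit
    rw [← hfg] at hsplit
    exact (ENNReal.add_right_inj hf).1 (hsplit.symm.trans (add_zero _).symm)
  refine le_antisymm (le_of_eq ?_) (lintegral_mono fun y => mul_le_mul_left (hgf y) _)
  calc ∫⁻ y, f y * k y ∂μ = ∫⁻ y, (g y * k y + (f y - g y) * k y) ∂μ := by
        simp only [← add_mul, add_tsub_cancel_of_le (hgf _)]
    _ = ∫⁻ y, g y * k y ∂μ + ∫⁻ y, (f y - g y) * k y ∂μ := lintegral_add_left (hg.mul hk) _
    _ = ∫⁻ y, g y * k y ∂μ := by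
        rw [lintegral_mul_eq_zero_of_lintegral_eq_zero hk hk_ne_top hsub, add_zero]

lemma lintegral_lintegral_mul_le [SFinite μ] [SFinite ν] {f : β → ℝ≥0∞}
    (hf : ∫⁻ y, f y ∂ν ≠ ∞) {k : α → β → ℝ≥0∞} (hk : Measurable (Function.uncurry k))
    (hk_ne_top : ∀ x y, k x y ≠ ∞) :
    ∫⁻ x, ∫⁻ y, f y * k x y ∂ν ∂μ ≤ ∫⁻ y, f y * ∫⁻ x, k x y ∂μ ∂ν := by
  obtain ⟨g, hg, hgf, hfg⟩ := exists_measurable_le_lintegral_eq ν f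
  calc ∫⁻ x, ∫⁻ y, f y * k x y ∂ν ∂μ = ∫⁻ x, ∫⁻ y, g y * k x y ∂ν ∂μ :=
        lintegral_congr fun x =>
          lintegral_mul_eq_of_le_of_lintegral_eq hg hgf hfg hf hk.of_uncurry_left (hk_ne_top x)
    _ = ∫⁻ y, ∫⁻ x, g y * k x y ∂μ ∂ν :=
        lintegral_lintegral_swap ((hg.comp measurable_snd).mul hk).aemeasurable
    _ = ∫⁻ y, g y * ∫⁻ x, k x y ∂μ ∂ν :=
        lintegral_congr fun y => lintegral_const_mul _ hk.of_uncurry_right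
    _ ≤ ∫⁻ y, f y * ∫⁻ x, k x y ∂μ ∂ν := lintegral_mono fun y => mul_le_mul_left (hgf y) _

end Lintegral

lemma abs_neg_min_zero_le (a : ℝ) : |-min a 0| ≤ |a| := by
  rcases le_total a 0 with h | h <;> simp [h, abs_nonneg]

lemma abs_neg_min_zero_sub_le (a b : ℝ) : |-min a 0 - -min b 0| ≤ |a - b| := by
  rw [neg_sub_neg, abs_sub_comm a b]
  simpa using abs_min_sub_min_le_max b 0 a 0

lemma abs_neg_min_zero_le_abs_sub {a b : ℝ} (hb : 0 ≤ b) : |-min a 0| ≤ |a - b| := by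
  rcases le_total a 0 with h | h
  · rw [min_eq_left h, abs_sub_comm]
    exact abs_le_abs (by linarith) (by linarith)
  · simp [h]

section Gagliardo

variable {N : ℕ} {s p : ℝ} {D : Set (EuclideanSpace ℝ (Fin N))}
  {u v : EuclideanSpace ℝ (Fin N) → ℝ}

lemma gagliardo_mono_of_abs_sub_le (hp : 0 ≤ p) (h : ∀ x y, |v x - v y| ≤ |u x - u y|) :
    gagliardo N s p D v ≤ gagliardo N s p D u :=
  lintegral_mono fun x => lintegral_mono fun y => by gcongr ENNReal.ofReal (?_ ^ _ / _); exact h x y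

lemma gagliardo_univ (hD : MeasurableSet D) :
    gagliardo N s p Set.univ u = gagliardo N s p D u + gagliardo N s p Dᶜ u := by
  rw [gagliardo, Measure.restrict_univ, ← lintegral_add_compl _ hD]
  rfl

lemma lintegral_rpow_lt_top_of_abs_le (hp : 0 < p) (hu : memLpLoc N p u)
    (hvu : ∀ x, |v x| ≤ |u x|) (hDb : Bornology.IsBounded D) (hvD : ∀ x ∉ D, v x = 0) :
    ∫⁻ x, ENNReal.ofReal (|v x| ^ p) < ⊤ := by
  have hsupp : (fun x => ENNReal.ofReal (|v x| ^ p)).support ⊆ closure D := fun x hx => by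
    by_contra hxD
    exact hx (by simp [hvD x (fun h => hxD (subset_closure h)), Real.zero_rpow hp.ne'])
  rw [← setLIntegral_eq_of_support_subset hsupp]
  refine lt_of_le_of_lt (lintegral_mono fun x => ?_) (hu _ hDb.isCompact_closure)
  gcongr ENNReal.ofReal (?_ ^ _)
  exact hvu x

lemma gagliardo_compl_neg_min_zero_le (hp : 0 < p) (hD : MeasurableSet D)
    (hu0 : ∀ x ∉ D, 0 ≤ u x) (hfin : ∫⁻ x, ENNReal.ofReal (|-min (u x) 0| ^ p) ≠ ⊤) :
    gagliardo N s p Dᶜ (fun x => -min (u x) 0) ≤ gagliardo N s p D u := by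
  have hvD : ∀ x ∉ D, -min (u x) 0 = 0 := fun x hx => by simp [hu0 x hx]
  have hk : Measurable (Function.uncurry fun (x y : EuclideanSpace ℝ (Fin N)) =>
      ENNReal.ofReal (‖x - y‖ ^ ((N : ℝ) + s * p))⁻¹) := by
    fun_prop
  calc gagliardo N s p Dᶜ (fun x => -min (u x) 0)
      = ∫⁻ x in Dᶜ, ∫⁻ y, ENNReal.ofReal (|-min (u y) 0| ^ p)
          * ENNReal.ofReal (‖x - y‖ ^ ((N : ℝ) + s * p))⁻¹ := by
        refine setLIntegral_congr_fun hD.compl fun x hx => lintegral_congr fun y => ?_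
        dsimp only
        rw [hvD x hx, zero_sub, abs_neg, div_eq_mul_inv, ENNReal.ofReal_mul (by positivity)]
    _ ≤ ∫⁻ y, ENNReal.ofReal (|-min (u y) 0| ^ p)
          * ∫⁻ x in Dᶜ, ENNReal.ofReal (‖x - y‖ ^ ((N : ℝ) + s * p))⁻¹ :=
        lintegral_lintegral_mul_le hfin hk fun _ _ => ENNReal.ofReal_ne_top
    _ = ∫⁻ y in D, ENNReal.ofReal (|-min (u y) 0| ^ p)
          * ∫⁻ x in Dᶜ, ENNReal.ofReal (‖x - y‖ ^ ((N : ℝ) + s * p))⁻¹ := by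
        refine (setLIntegral_eq_of_support_subset fun y hy => ?_).symm
        by_contra hyD
        exact hy (by simp [hvD y hyD, Real.zero_rpow hp.ne'])
    _ ≤ ∫⁻ y in D, ∫⁻ x in Dᶜ, ENNReal.ofReal (|u y - u x| ^ p / ‖y - x‖ ^ ((N : ℝ) + s * p)) := by
        refine lintegral_mono fun y => ?_
        rw [← lintegral_const_mul' _ _ ENNReal.ofReal_ne_top]
        refine setLIntegral_mono' hD.compl fun x hx => ?_
        rw [← ENNReal.ofReal_mul (by positivity), ← div_eq_mul_inv, norm_sub_rev]
        gcongr ENNReal.ofReal (?_ ^ _ / _)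
        exact abs_neg_min_zero_le_abs_sub (hu0 x hx)
    _ ≤ gagliardo N s p D u :=
        lintegral_mono fun y => lintegral_mono' Measure.restrict_le_self le_rfl

end Gagliardo

theorem stmt10_general (N : ℕ) (s p : ℝ) (hp : 1 < p)
    (D : Set (EuclideanSpace ℝ (Fin N))) (hD : IsOpen D)
    (hDb : Bornology.IsBounded D)
    (u : EuclideanSpace ℝ (Fin N) → ℝ) (hu : memWtilde N s p D u)
    (hu0 : ∀ x, x ∉ D → 0 ≤ u x) :
    (∫⁻ x, ENNReal.ofReal (|(-min (u x) 0)| ^ p) < ⊤) ∧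
    gagliardo N s p Set.univ (fun x => -min (u x) 0) < ⊤ ∧
    (∀ x, x ∉ D → -min (u x) 0 = 0) := by
  obtain ⟨hu_loc, hu_gag⟩ := hu
  have hp0 : 0 < p := zero_lt_one.trans hp
  have hvD : ∀ x, x ∉ D → -min (u x) 0 = 0 := fun x hx => by simp [hu0 x hx]
  have hLp :=
    lintegral_rpow_lt_top_of_abs_le hp0 hu_loc (fun x => abs_neg_min_zero_le (u x)) hDb hvD
  refine ⟨hLp, ?_, hvD⟩
  rw [gagliardo_univ hD.measurableSet]
  exact ENNReal.add_lt_top.2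
    ⟨(gagliardo_mono_of_abs_sub_le hp0.le fun x y => abs_neg_min_zero_sub_le _ _).trans_lt hu_gag,
      (gagliardo_compl_neg_min_zero_le hp0 hD.measurableSet hu0 hLp.ne).trans_lt hu_gag⟩

theorem stmt10 (N : ℕ) (s p : ℝ) (hs : s ∈ Set.Ioo (0:ℝ) 1) (hp : 1 < p)
    (D : Set (EuclideanSpace ℝ (Fin N))) (hD : IsOpen D)
    (hDb : Bornology.IsBounded D)
    (u : EuclideanSpace ℝ (Fin N) → ℝ) (hu : memWtilde N s p D u)
    (hu0 : ∀ x, x ∉ D → 0 ≤ u x) :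
    (∫⁻ x, ENNReal.ofReal (|(-min (u x) 0)| ^ p) < ⊤) ∧
    gagliardo N s p Set.univ (fun x => -min (u x) 0) < ⊤ ∧
    (∀ x, x ∉ D → -min (u x) 0 = 0) :=
  stmt10_general N s p hp D hD hDb u hu hu0
end
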